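/- Whitney decomposition partition property: For distinct ξ, ξ' ∈ ℝ², there is a unique maximal pair of dyadic cubes Q ∋ ξ and Q' ∋ ξ' with |Q| = |Q'| and 4·diam(Q) ≤ dist(Q, Q'). Denoting by 𝒲 the family of all such pairs, one has Σ_{(Q,Q')∈𝒲} χ_Q(ξ)χ_{Q'}(ξ') = 1 for almost every (ξ,ξ') ∈ ℝ² × ℝ², and moreover any pair (Q,Q') ∈ 𝒲 satisfies dist(Q,Q') ≤ 10·diam(Q), so that for each Q the number of Q' with (Q,Q') ∈ 𝒲 is bounded by an absolute constant. -/

import Mathlib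

open MeasureTheory
open scoped Classical

noncomputable section

abbrev E2 := EuclideanSpace ℝ (Fin 2)

/-- The dyadic cube of side-length `2^j` in `ℝ²` indexed by `k ∈ ℤ²`. -/
def dyadicCube (j : ℤ) (k : Fin 2 → ℤ) : Set E2 :=
  {ξ | ∀ i, (2 : ℝ) ^ j * k i ≤ ξ i ∧ ξ i < (2 : ℝ) ^ j * (k i + 1)}

/-- The distance between two sets. -/
noncomputable def setDist (A B : Set E2) : ℝ :=
  sInf {d | ∃ a ∈ A, ∃ b ∈ B, d = dist a b}

/-- `goodPair j k k' ξ ξ'` : the dyadic cubes `Q = Q_{j,k} ∋ ξ` and `Q' = Q_{j,k'} ∋ ξ'`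
have equal side-length `2^j` and satisfy `4 diam(Q) ≤ dist(Q,Q')`. -/
def goodPair (j : ℤ) (k k' : Fin 2 → ℤ) (ξ ξ' : E2) : Prop :=
  ξ ∈ dyadicCube j k ∧ ξ' ∈ dyadicCube j k' ∧
    4 * Metric.diam (dyadicCube j k) ≤ setDist (dyadicCube j k) (dyadicCube j k')

/-- Membership in the Whitney family `𝒲`: the pair of cubes `(Q_{j,k}, Q_{j,k'})` is the
maximal good pair for some pair of distinct points. -/
def isWhitney (j : ℤ) (k k' : Fin 2 → ℤ) : Prop :=
  ∃ η η' : E2, η ≠ η' ∧ goodPair j k k' η η' ∧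
    ∀ j₂ k₂ k₂', goodPair j₂ k₂ k₂' η η' → j₂ ≤ j

/-!
A good pair at scale `2^j` for `ξ ≠ ξ'` forces `2^j ≤ |ξ - ξ'|`, and every scale with
`9 · 2^j ≤ |ξ - ξ'|` carries one, so a maximal scale exists; at a given scale the cubes containing
`ξ` and `ξ'` are unique. Dyadic cubes are nested, so a good pair at a larger scale containing the
points of a Whitney pair would also contain the points witnessing it: a Whitney pair is the
maximal good pair of every pair of points it contains, and the sum has exactly one nonzero term.
Maximality also makes the parent pair bad, `dist(P, P') < 4 diam P = 8√2 · 2^j`, and every point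
of a parent lies within `√2 · 2^j` of its child, whence `dist(Q, Q') ≤ 10 diam Q`; then `Q'` is at
most 18 steps away from `Q` in each coordinate.
-/

open Metric Bornology

lemma dist_le_sqrt_two_mul {x y : E2} {c : ℝ} (h : ∀ i, |x i - y i| ≤ c) :
    dist x y ≤ √2 * c := by
  have hc : 0 ≤ c := (abs_nonneg _).trans (h 0)
  have h0 := pow_le_pow_left₀ (abs_nonneg _) (h 0) 2
  have h1 := pow_le_pow_left₀ (abs_nonneg _) (h 1) 2
  rw [EuclideanSpace.dist_eq, Fin.sum_univ_two, Real.dist_eq, Real.dist_eq,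
    ← Real.sqrt_sq hc, ← Real.sqrt_mul zero_le_two]
  exact Real.sqrt_le_sqrt (by linarith)

lemma exists_mem_Ico_abs_sub_lt {a b c x ε : ℝ} (hab : a < b) (hc : 0 ≤ c) (hx : a - c ≤ x)
    (hx' : x ≤ b + c) (hε : 0 < ε) : ∃ y ∈ Set.Ico a b, |x - y| < c + ε := by
  rcases lt_or_ge x a with hxa | hxa
  · exact ⟨a, ⟨le_rfl, hab⟩, by rw [abs_lt]; constructor <;> linarith⟩
  rcases lt_or_ge x b with hxb | hxb
  · exact ⟨x, ⟨hxa, hxb⟩, by rw [sub_self, abs_zero]; linarith⟩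
  have hδ : 0 < min (ε / 2) (b - a) := lt_min (by linarith) (by linarith)
  refine ⟨b - min (ε / 2) (b - a),
    ⟨by linarith [min_le_right (ε / 2) (b - a)], by linarith⟩, ?_⟩
  rw [abs_lt]
  constructor <;> linarith [min_le_left (ε / 2) (b - a)]

section SetDist

variable {A B A' B' : Set E2} {a b : E2}

lemma setDist_le_dist (ha : a ∈ A) (hb : b ∈ B) : setDist A B ≤ dist a b :=
  csInf_le ⟨0, by rintro _ ⟨a, -, b, -, rfl⟩; exact dist_nonneg⟩ ⟨a, ha, b, hb, rfl⟩

lemma le_setDist {c : ℝ} (hA : A.Nonempty) (hB : B.Nonempty)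
    (h : ∀ a ∈ A, ∀ b ∈ B, c ≤ dist a b) : c ≤ setDist A B := by
  obtain ⟨a, ha⟩ := hA
  obtain ⟨b, hb⟩ := hB
  refine le_csInf ⟨_, a, ha, b, hb, rfl⟩ ?_
  rintro _ ⟨a, ha, b, hb, rfl⟩
  exact h a ha b hb

lemma exists_dist_lt_setDist_add {ε : ℝ} (hA : A.Nonempty) (hB : B.Nonempty) (hε : 0 < ε) :
    ∃ a ∈ A, ∃ b ∈ B, dist a b < setDist A B + ε := by
  obtain ⟨a, ha⟩ := hA
  obtain ⟨b, hb⟩ := hB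
  obtain ⟨_, ⟨a, ha, b, hb, rfl⟩, hlt⟩ :=
    exists_lt_of_csInf_lt (s := {d | ∃ a ∈ A, ∃ b ∈ B, d = dist a b}) ⟨_, a, ha, b, hb, rfl⟩
      (lt_add_of_pos_right (setDist A B) hε)
  exact ⟨a, ha, b, hb, hlt⟩

lemma dist_le_diam_add_setDist_add_diam (hA : IsBounded A) (hB : IsBounded B) (ha : a ∈ A)
    (hb : b ∈ B) : dist a b ≤ diam A + setDist A B + diam B := by
  have : dist a b - diam A - diam B ≤ setDist A B :=
    le_setDist ⟨a, ha⟩ ⟨b, hb⟩ fun a' ha' b' hb' => by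
      linarith [dist_triangle4 a a' b' b, dist_le_diam_of_mem hA ha ha',
        dist_le_diam_of_mem hB hb' hb]
  linarith

lemma setDist_le_add_setDist_add {r s : ℝ} (hA : A.Nonempty) (hB : B.Nonempty)
    (hA' : A'.Nonempty) (hB' : B'.Nonempty) (hr : ∀ a' ∈ A', infDist a' A ≤ r)
    (hs : ∀ b' ∈ B', infDist b' B ≤ s) : setDist A B ≤ r + setDist A' B' + s := by
  refine le_of_forall_pos_lt_add fun ε hε => ?_
  have hε' : 0 < ε / 3 := by positivity
  obtain ⟨a', ha', b', hb', hab'⟩ := exists_dist_lt_setDist_add hA' hB' hε'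
  obtain ⟨a, ha, haa'⟩ := (infDist_lt_iff hA).1 ((hr a' ha').trans_lt (lt_add_of_pos_right r hε'))
  obtain ⟨b, hb, hbb'⟩ := (infDist_lt_iff hB).1 ((hs b' hb').trans_lt (lt_add_of_pos_right s hε'))
  calc setDist A B ≤ dist a b := setDist_le_dist ha hb
    _ ≤ dist a' a + dist a' b' + dist b' b := by
      linarith [dist_triangle4 a a' b' b, dist_comm a a']
    _ < r + setDist A' B' + s + ε := by linarith

end SetDist

section DyadicCube

variable {j : ℤ} {k : Fin 2 → ℤ}

def dyadicIndex (j : ℤ) (ξ : E2) : Fin 2 → ℤ := fun i => ⌊ξ i / 2 ^ j⌋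

lemma mem_dyadicCube_iff {ξ : E2} : ξ ∈ dyadicCube j k ↔ dyadicIndex j ξ = k := by
  have h : (0 : ℝ) < 2 ^ j := by positivity
  simp only [dyadicCube, Set.mem_ofPred_eq, funext_iff, dyadicIndex, Int.floor_eq_iff,
    le_div_iff₀ h, div_lt_iff₀ h, mul_comm]

lemma mem_dyadicCube_dyadicIndex (j : ℤ) (ξ : E2) : ξ ∈ dyadicCube j (dyadicIndex j ξ) :=
  mem_dyadicCube_iff.2 rfl

lemma dyadicIndex_of_le {j₂ : ℤ} (h : j ≤ j₂) (ξ : E2) :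
    dyadicIndex j₂ ξ = fun i => dyadicIndex j ξ i / 2 ^ (j₂ - j).toNat := by
  have hpow : (2 : ℝ) ^ j₂ = 2 ^ j * ((2 ^ (j₂ - j).toNat : ℕ) : ℝ) := by
    rw [Nat.cast_pow, Nat.cast_ofNat, ← zpow_natCast, ← zpow_add₀ two_ne_zero]
    congr 1
    omega
  funext i
  rw [dyadicIndex, hpow, ← div_div, Int.floor_div_natCast]
  push_cast
  rfl

lemma dyadicIndex_succ (ξ : E2) : dyadicIndex (j + 1) ξ = fun i => dyadicIndex j ξ i / 2 := by
  simpa using dyadicIndex_of_le (le_add_of_nonneg_right zero_le_one) ξ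

lemma mem_dyadicCube_of_le {j₂ : ℤ} {k₂ : Fin 2 → ℤ} {x y : E2} (h : j ≤ j₂)
    (hx : x ∈ dyadicCube j k) (hy : y ∈ dyadicCube j k) (hx₂ : x ∈ dyadicCube j₂ k₂) :
    y ∈ dyadicCube j₂ k₂ := by
  rw [mem_dyadicCube_iff] at hx hy hx₂ ⊢
  rw [← hx₂, dyadicIndex_of_le h, dyadicIndex_of_le h, hx, hy]

lemma mem_dyadicCube_succ {ξ : E2} (h : ξ ∈ dyadicCube j k) :
    ξ ∈ dyadicCube (j + 1) (fun i => k i / 2) := by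
  rw [mem_dyadicCube_iff] at h ⊢
  rw [dyadicIndex_succ, h]

lemma dyadicCube_nonempty (j : ℤ) (k : Fin 2 → ℤ) : (dyadicCube j k).Nonempty :=
  ⟨WithLp.toLp 2 fun i => 2 ^ j * k i,
    fun _ => ⟨le_rfl, mul_lt_mul_of_pos_left (lt_add_one _) (by positivity)⟩⟩

lemma dist_le_of_mem_dyadicCube {x y : E2} (hx : x ∈ dyadicCube j k)
    (hy : y ∈ dyadicCube j k) : dist x y ≤ √2 * 2 ^ j :=
  dist_le_sqrt_two_mul fun i => by
    have := mul_add_one ((2 : ℝ) ^ j) (k i)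
    rw [abs_le]
    constructor <;> linarith [hx i, hy i]

lemma isBounded_dyadicCube (j : ℤ) (k : Fin 2 → ℤ) : IsBounded (dyadicCube j k) :=
  isBounded_iff.2 ⟨_, fun _ hx _ hy => dist_le_of_mem_dyadicCube hx hy⟩

lemma diam_dyadicCube (j : ℤ) (k : Fin 2 → ℤ) : diam (dyadicCube j k) = √2 * 2 ^ j := by
  have hs : (0 : ℝ) < 2 ^ j := by positivity
  refine le_antisymm (diam_le_of_forall_dist_le (by positivity)
    fun _ hx _ hy => dist_le_of_mem_dyadicCube hx hy) (le_of_forall_lt fun c hc => ?_)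
  obtain ⟨t, hct, hts⟩ := exists_between (max_lt hs ((div_lt_iff₀' (by positivity)).2 hc))
  obtain ⟨ht, hct⟩ := max_lt_iff.1 hct
  set p : E2 := WithLp.toLp 2 fun i => 2 ^ j * k i
  set q : E2 := WithLp.toLp 2 fun i => 2 ^ j * k i + t
  have hp : p ∈ dyadicCube j k :=
    fun i => ⟨le_rfl, by linarith [mul_add_one ((2 : ℝ) ^ j) (k i)]⟩
  have hq : q ∈ dyadicCube j k := fun i => by
    show _ ≤ 2 ^ j * (k i : ℝ) + t ∧ 2 ^ j * (k i : ℝ) + t < _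
    constructor <;> linarith [mul_add_one ((2 : ℝ) ^ j) (k i)]
  have hpq : dist p q = √2 * t := by
    simpa [p, q, EuclideanSpace.dist_eq] using Real.sqrt_sq ht.le
  calc c < √2 * t := (div_lt_iff₀' (by positivity)).1 hct
    _ = dist p q := hpq.symm
    _ ≤ diam (dyadicCube j k) := dist_le_diam_of_mem (isBounded_dyadicCube j k) hp hq

lemma infDist_dyadicCube_le_of_mem_parent {x : E2}
    (hx : x ∈ dyadicCube (j + 1) (fun i => k i / 2)) :
    infDist x (dyadicCube j k) ≤ √2 * 2 ^ j := by
  have hs : (0 : ℝ) < 2 ^ j := by positivity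
  have hnear : ∀ i, 2 ^ j * k i - 2 ^ j ≤ x i ∧ x i ≤ 2 ^ j * (k i + 1) + 2 ^ j := fun i => by
    have hlo : (k i : ℝ) - 1 ≤ 2 * (k i / 2 : ℤ) := by
      exact_mod_cast (by omega : k i - 1 ≤ 2 * (k i / 2))
    have hhi : 2 * ((k i / 2 : ℤ) : ℝ) ≤ k i := by
      exact_mod_cast (by omega : 2 * (k i / 2) ≤ k i)
    obtain ⟨h₁, h₂⟩ := hx i
    rw [zpow_add_one₀ two_ne_zero] at h₁ h₂
    constructor <;> nlinarith
  refine le_of_forall_pos_lt_add fun ε hε => ?_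
  have hcoord : ∀ i, ∃ y ∈ Set.Ico (2 ^ j * (k i : ℝ)) (2 ^ j * (k i + 1)),
      |x i - y| < 2 ^ j + ε / 2 := fun i =>
    exists_mem_Ico_abs_sub_lt (by linarith [mul_add_one ((2 : ℝ) ^ j) (k i)]) hs.le
      (by linarith [hnear i]) (by linarith [hnear i]) (by positivity)
  choose y hy hxy using hcoord
  refine (infDist_lt_iff (dyadicCube_nonempty j k)).2 ⟨WithLp.toLp 2 y, hy, ?_⟩
  calc dist x (WithLp.toLp 2 y) ≤ √2 * (2 ^ j + ε / 2) :=
      dist_le_sqrt_two_mul fun i => (hxy i).le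
    _ < √2 * 2 ^ j + ε := by nlinarith [Real.sqrt_two_lt_three_halves]

end DyadicCube

def IsMaximalGoodPair (j : ℤ) (k k' : Fin 2 → ℤ) (ξ ξ' : E2) : Prop :=
  goodPair j k k' ξ ξ' ∧ ∀ j₂ k₂ k₂', goodPair j₂ k₂ k₂' ξ ξ' → j₂ ≤ j

section GoodPair

variable {j : ℤ} {k k' : Fin 2 → ℤ} {ξ ξ' : E2}

lemma zpow_le_dist_of_goodPair (hg : goodPair j k k' ξ ξ') : (2 : ℝ) ^ j ≤ dist ξ ξ' := by
  have hgood := hg.2.2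
  rw [diam_dyadicCube] at hgood
  nlinarith [setDist_le_dist hg.1 hg.2.1, Real.one_lt_sqrt_two, zpow_pos (two_pos (α := ℝ)) j]

lemma goodPair_of_nine_mul_zpow_le (hξ : ξ ∈ dyadicCube j k) (hξ' : ξ' ∈ dyadicCube j k')
    (h : 9 * 2 ^ j ≤ dist ξ ξ') : goodPair j k k' ξ ξ' := by
  refine ⟨hξ, hξ', ?_⟩
  have := dist_le_diam_add_setDist_add_diam (isBounded_dyadicCube j k)
    (isBounded_dyadicCube j k') hξ hξ'
  rw [diam_dyadicCube, diam_dyadicCube] at this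
  rw [diam_dyadicCube]
  nlinarith [Real.sqrt_two_lt_three_halves, zpow_pos (two_pos (α := ℝ)) j]

lemma exists_goodPair (h : ξ ≠ ξ') : ∃ j k k', goodPair j k k' ξ ξ' := by
  obtain ⟨j, hj, -⟩ :=
    exists_mem_Ioc_zpow (div_pos (dist_pos.2 h) (by norm_num : (0 : ℝ) < 9)) one_lt_two
  exact ⟨j, _, _, goodPair_of_nine_mul_zpow_le (mem_dyadicCube_dyadicIndex j ξ)
    (mem_dyadicCube_dyadicIndex j ξ') (by linarith)⟩

lemma exists_isMaximalGoodPair (h : ξ ≠ ξ') : ∃ j k k', IsMaximalGoodPair j k k' ξ ξ' := by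
  obtain ⟨n, hn⟩ := pow_unbounded_of_one_lt (dist ξ ξ') one_lt_two
  obtain ⟨j, ⟨k, k', hg⟩, hmax⟩ := Int.exists_greatest_of_bdd
    (P := fun j => ∃ k k', goodPair j k k' ξ ξ')
    ⟨n, fun j ⟨_, _, hg⟩ => (zpow_lt_zpow_iff_right₀ (one_lt_two : (1 : ℝ) < 2)).1
      (by rw [zpow_natCast]; exact (zpow_le_dist_of_goodPair hg).trans_lt hn) |>.le⟩
    (exists_goodPair h)
  exact ⟨j, k, k', hg, fun j₂ k₂ k₂' hg₂ => hmax j₂ ⟨k₂, k₂', hg₂⟩⟩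

lemma IsMaximalGoodPair.eq {j₂ : ℤ} {k₂ k₂' : Fin 2 → ℤ} (h : IsMaximalGoodPair j k k' ξ ξ')
    (h₂ : IsMaximalGoodPair j₂ k₂ k₂' ξ ξ') : (j₂, k₂, k₂') = (j, k, k') := by
  obtain rfl : j₂ = j := le_antisymm (h.2 _ _ _ h₂.1) (h₂.2 _ _ _ h.1)
  obtain rfl := mem_dyadicCube_iff.1 h.1.1
  obtain rfl := mem_dyadicCube_iff.1 h.1.2.1
  obtain rfl := mem_dyadicCube_iff.1 h₂.1.1
  obtain rfl := mem_dyadicCube_iff.1 h₂.1.2.1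
  rfl

lemma existsUnique_isMaximalGoodPair (h : ξ ≠ ξ') :
    ∃! q : ℤ × (Fin 2 → ℤ) × (Fin 2 → ℤ), IsMaximalGoodPair q.1 q.2.1 q.2.2 ξ ξ' := by
  obtain ⟨j, k, k', hmax⟩ := exists_isMaximalGoodPair h
  exact ⟨(j, k, k'), hmax, fun q hq => hmax.eq hq⟩

end GoodPair

section Whitney

variable {j : ℤ} {k k' : Fin 2 → ℤ}

lemma IsMaximalGoodPair.of_isWhitney {ξ ξ' : E2} (hw : isWhitney j k k')
    (hξ : ξ ∈ dyadicCube j k) (hξ' : ξ' ∈ dyadicCube j k') : IsMaximalGoodPair j k k' ξ ξ' := by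
  obtain ⟨η, η', -, hg, hmax⟩ := hw
  refine ⟨⟨hξ, hξ', hg.2.2⟩, fun j₂ k₂ k₂' hg₂ => ?_⟩
  by_contra! hlt
  exact hlt.not_ge <| hmax j₂ k₂ k₂' ⟨mem_dyadicCube_of_le hlt.le hξ hg.1 hg₂.1,
    mem_dyadicCube_of_le hlt.le hξ' hg.2.1 hg₂.2.1, hg₂.2.2⟩

lemma tsum_ite_isWhitney_mem_dyadicCube {ξ ξ' : E2} (h : ξ ≠ ξ') :
    (∑' q : ℤ × (Fin 2 → ℤ) × (Fin 2 → ℤ),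
      (if isWhitney q.1 q.2.1 q.2.2 ∧ ξ ∈ dyadicCube q.1 q.2.1 ∧ ξ' ∈ dyadicCube q.1 q.2.2
        then (1 : ℝ) else 0)) = 1 := by
  obtain ⟨q, hq, huniq⟩ := existsUnique_isMaximalGoodPair h
  rw [tsum_eq_single q fun q' hq' => if_neg fun ⟨hw, hξ, hξ'⟩ =>
    hq' (huniq q' (IsMaximalGoodPair.of_isWhitney hw hξ hξ')),
    if_pos ⟨⟨ξ, ξ', h, hq⟩, hq.1.1, hq.1.2.1⟩]

lemma setDist_le_ten_mul_diam_of_isWhitney (hw : isWhitney j k k') :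
    setDist (dyadicCube j k) (dyadicCube j k') ≤ 10 * diam (dyadicCube j k) := by
  obtain ⟨η, η', -, hg, hmax⟩ := hw
  have hparent : setDist (dyadicCube (j + 1) (fun i => k i / 2))
      (dyadicCube (j + 1) (fun i => k' i / 2)) <
        4 * diam (dyadicCube (j + 1) (fun i => k i / 2)) := by
    by_contra! hgood
    have := hmax _ _ _ ⟨mem_dyadicCube_succ hg.1, mem_dyadicCube_succ hg.2.1, hgood⟩
    omega
  have hchild := setDist_le_add_setDist_add (dyadicCube_nonempty j k) (dyadicCube_nonempty j k')
    (dyadicCube_nonempty _ _) (dyadicCube_nonempty _ _)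
    (fun _ => infDist_dyadicCube_le_of_mem_parent) (fun _ => infDist_dyadicCube_le_of_mem_parent)
  rw [diam_dyadicCube, zpow_add_one₀ two_ne_zero] at hparent
  rw [diam_dyadicCube]
  linarith

lemma abs_sub_le_of_dist_le {n : ℤ} {ξ ξ' : E2} (hξ : ξ ∈ dyadicCube j k)
    (hξ' : ξ' ∈ dyadicCube j k') (h : dist ξ ξ' ≤ n * 2 ^ j) (i : Fin 2) : |k' i - k i| ≤ n := by
  have hs : (0 : ℝ) < 2 ^ j := by positivity
  have hi : |ξ i - ξ' i| ≤ n * 2 ^ j := by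
    rw [← Real.dist_eq]
    exact (PiLp.dist_apply_le ξ ξ' i).trans h
  rw [abs_le] at hi
  have hlo : ((k' i - k i - 1 : ℤ) : ℝ) < n := by
    refine lt_of_mul_lt_mul_left ?_ hs.le
    push_cast
    nlinarith [hξ i, hξ' i]
  have hhi : ((k i - k' i - 1 : ℤ) : ℝ) < n := by
    refine lt_of_mul_lt_mul_left ?_ hs.le
    push_cast
    nlinarith [hξ i, hξ' i]
  have := Int.cast_lt.1 hlo
  have := Int.cast_lt.1 hhi
  exact abs_le.2 ⟨by omega, by omega⟩

lemma abs_sub_le_of_isWhitney (hw : isWhitney j k k') (i : Fin 2) : |k' i - k i| ≤ 18 := by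
  have hdist := setDist_le_ten_mul_diam_of_isWhitney hw
  obtain ⟨η, η', -, hg, -⟩ := hw
  refine abs_sub_le_of_dist_le hg.1 hg.2.1 ?_ i
  have := dist_le_diam_add_setDist_add_diam (isBounded_dyadicCube j k)
    (isBounded_dyadicCube j k') hg.1 hg.2.1
  rw [diam_dyadicCube, diam_dyadicCube] at this
  rw [diam_dyadicCube] at hdist
  push_cast
  nlinarith [Real.sqrt_two_lt_three_halves, zpow_pos (two_pos (α := ℝ)) j]

lemma finite_and_ncard_isWhitney_le (j : ℤ) (k : Fin 2 → ℤ) :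
    {k' | isWhitney j k k'}.Finite ∧ {k' | isWhitney j k k'}.ncard ≤ 37 ^ 2 := by
  have hsub : {k' | isWhitney j k k'} ⊆ Set.Icc (fun i => k i - 18) (fun i => k i + 18) :=
    fun k' hk' => ⟨fun i => by linarith [(abs_le.1 (abs_sub_le_of_isWhitney hk' i)).1],
      fun i => by linarith [(abs_le.1 (abs_sub_le_of_isWhitney hk' i)).2]⟩
  refine ⟨(Set.finite_Icc _ _).subset hsub,
    (Set.ncard_le_ncard hsub (Set.finite_Icc _ _)).trans ?_⟩
  have hcard (m : ℤ) : (m + 18 + 1 - (m - 18)).toNat = 37 := by omega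
  rw [← Finset.coe_Icc, Set.ncard_coe_finset, Pi.card_Icc, Fin.prod_univ_two, Int.card_Icc,
    Int.card_Icc, hcard, hcard]
  exact (sq 37).ge

end Whitney

/-- Whitney decomposition: for distinct `ξ, ξ'` there is a unique maximal good pair of
dyadic cubes; `∑_{(Q,Q')∈𝒲} χ_Q(ξ)χ_{Q'}(ξ') = 1` off the diagonal (hence a.e.);
every Whitney pair satisfies `dist(Q,Q') ≤ 10 diam(Q)`; and for each `Q` the number of
`Q'` with `(Q,Q') ∈ 𝒲` is bounded by an absolute constant. -/
theorem stmt7 :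
    (∀ ξ ξ' : E2, ξ ≠ ξ' →
      ∃! q : ℤ × (Fin 2 → ℤ) × (Fin 2 → ℤ),
        goodPair q.1 q.2.1 q.2.2 ξ ξ' ∧
          ∀ j₂ k₂ k₂', goodPair j₂ k₂ k₂' ξ ξ' → j₂ ≤ q.1) ∧
    (∀ ξ ξ' : E2, ξ ≠ ξ' →
      (∑' q : ℤ × (Fin 2 → ℤ) × (Fin 2 → ℤ),
        (if isWhitney q.1 q.2.1 q.2.2 ∧ ξ ∈ dyadicCube q.1 q.2.1 ∧ ξ' ∈ dyadicCube q.1 q.2.2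
          then (1 : ℝ) else 0)) = 1) ∧
    (∀ j k k', isWhitney j k k' →
      setDist (dyadicCube j k) (dyadicCube j k') ≤ 10 * Metric.diam (dyadicCube j k)) ∧
    (∃ C : ℕ, ∀ j k, {k' | isWhitney j k k'}.Finite ∧ Set.ncard {k' | isWhitney j k k'} ≤ C) :=
  ⟨fun _ _ => existsUnique_isMaximalGoodPair, fun _ _ => tsum_ite_isWhitney_mem_dyadicCube,
    fun _ _ _ => setDist_le_ten_mul_diam_of_isWhitney, ⟨_, finite_and_ncard_isWhitney_le⟩⟩
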